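/- arXiv:1610.10073 — 4 statements merged into one kernel-verified Lean document; each statement's English description precedes it below -/
import Mathlib

section
/- Let A ⊆ [0,1] be measurable and let {I_j : j ∈ J} be a finite collection of closed intervals with nonempty interior such that (i) for each j, the interval 2I_j (the interval with the same right endpoint as I_j but twice its length) is contained in [0,1]; (ii) the interiors of the I_j are pairwise disjoint; (iii) the total length ∑_j |I_j| exceeds c₁; (iv) |A ∩ 2I_j| ≥ c₂ |2I_j| for every j. Then |A| ≥ (c₁·c₂)/3. -/
open MeasureTheory Set

/-- Covering lemma: if `A ⊆ [0,1]` and intervals `I_j = [t j - r j, t j]` have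
pairwise disjoint interiors, the doubled intervals `2I_j = [t j - 2 r j, t j]`
lie in `[0,1]`, the total length exceeds `c₁`, and `A` occupies at least a
`c₂`-fraction of each `2I_j`, then `|A| ≥ c₁ c₂ / 3`. -/
theorem stmt_0 (A : Set ℝ) (hA : MeasurableSet A) (hAsub : A ⊆ Icc (0:ℝ) 1)
    (J : Finset ℕ) (t r : ℕ → ℝ) (hr : ∀ j ∈ J, 0 < r j)
    (c₁ c₂ : ℝ) (hc₁ : 0 < c₁) (hc₂ : 0 < c₂)
    (h2sub : ∀ j ∈ J, Icc (t j - 2 * r j) (t j) ⊆ Icc (0:ℝ) 1)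
    (hdisj : ∀ i ∈ J, ∀ j ∈ J, i ≠ j →
      Disjoint (Ioo (t i - r i) (t i)) (Ioo (t j - r j) (t j)))
    (hlen : c₁ < ∑ j ∈ J, r j)
    (hfrac : ∀ j ∈ J,
      ENNReal.ofReal (c₂ * (2 * r j)) ≤ volume (A ∩ Icc (t j - 2 * r j) (t j))) :
    ENNReal.ofReal (c₁ * c₂ / 3) ≤ volume A := by
  classical
  set S : ℝ := ∑ j ∈ J, r j with hS
  have hSpos : 0 < S := lt_trans hc₁ hlen
  set τ : ℝ := (3 * S / c₁ - 1) / 2 with hτdef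
  have hτ : 1 < τ := by
    have : 3 < 3 * S / c₁ := by
      rw [lt_div_iff₀ hc₁]; nlinarith
    rw [hτdef]; linarith
  have hball : ∀ j, Metric.closedBall (t j - r j) (r j) = Icc (t j - 2 * r j) (t j) := by
    intro j
    rw [Real.closedBall_eq_Icc]
    congr 1 <;> ring
  -- Vitali selection
  obtain ⟨u, huJ, hudisj, hcov⟩ :=
    Vitali.exists_disjoint_subfamily_covering_enlargement
      (fun j => Metric.closedBall (t j - r j) (r j)) (↑J : Set ℕ) r τ hτ
      (fun a ha => (hr a ha).le) S
      (fun a ha => Finset.single_le_sum (fun j hj => (hr j hj).le) ha)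
      (fun a ha => ⟨t a - r a, Metric.mem_closedBall_self (hr a ha).le⟩)
  have hufin : u.Finite := (J.finite_toSet.subset huJ)
  set U : Finset ℕ := hufin.toFinset with hU
  have hUJ : ∀ b ∈ U, b ∈ J := by
    intro b hb
    exact huJ (hufin.mem_toFinset.mp hb)
  -- enlargement containment
  have henl : ∀ a ∈ J, ∃ b ∈ U, Metric.closedBall (t a - r a) (r a) ⊆
      Metric.closedBall (t b - r b) ((2 * τ + 1) * r b) := by
    intro a ha
    obtain ⟨b, hb, ⟨p, hp1, hp2⟩, hrab⟩ := hcov a ha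
    refine ⟨b, hufin.mem_toFinset.mpr hb, fun c hc => ?_⟩
    have hrpos_a : 0 ≤ r a := (hr a ha).le
    have hrpos_b : 0 ≤ r b := (hr b (huJ hb)).le
    simp only [Metric.mem_closedBall] at *
    have d1 : dist (t a - r a) (t b - r b) ≤ r a + r b :=
      (dist_triangle _ p _).trans (by
        rw [dist_comm (t a - r a) p]
        exact add_le_add hp1 hp2)
    calc dist c (t b - r b) ≤ dist c (t a - r a) + dist (t a - r a) (t b - r b) :=
          dist_triangle _ _ _
      _ ≤ r a + (r a + r b) := add_le_add hc d1
      _ ≤ τ * r b + (τ * r b + r b) := by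
          have : r a ≤ τ * r b := hrab
          linarith
      _ = (2 * τ + 1) * r b := by ring
  -- total length bound: ofReal S ≤ ∑_{b∈U} 2(2τ+1) r b
  have hIoo_sub : (⋃ j ∈ J, Ioo (t j - r j) (t j)) ⊆
      ⋃ b ∈ U, Metric.closedBall (t b - r b) ((2 * τ + 1) * r b) := by
    intro x hx
    simp only [mem_iUnion] at hx ⊢
    obtain ⟨j, hj, hxj⟩ := hx
    obtain ⟨b, hb, hsub⟩ := henl j hj
    refine ⟨b, hb, hsub ?_⟩
    rw [hball]
    have := hxj.1
    have := hxj.2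
    have hrj := hr j hj
    constructor <;> linarith
  have hsum1 : ENNReal.ofReal S ≤ ∑ b ∈ U, ENNReal.ofReal (2 * (2 * τ + 1) * r b) := by
    have h1 : ENNReal.ofReal S = volume (⋃ j ∈ J, Ioo (t j - r j) (t j)) := by
      rw [measure_biUnion_finset]
      · rw [hS, ENNReal.ofReal_sum_of_nonneg (fun j hj => (hr j hj).le)]
        congr 1
        ext j
        rw [Real.volume_Ioo]
        congr 1
        ring
      · intro i hi j hj hij
        exact hdisj i hi j hj hij
      · exact fun j _ => measurableSet_Ioo
    rw [h1]
    calc volume (⋃ j ∈ J, Ioo (t j - r j) (t j))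
        ≤ volume (⋃ b ∈ U, Metric.closedBall (t b - r b) ((2 * τ + 1) * r b)) :=
          measure_mono hIoo_sub
      _ ≤ ∑ b ∈ U, volume (Metric.closedBall (t b - r b) ((2 * τ + 1) * r b)) :=
          measure_biUnion_finset_le _ _
      _ = ∑ b ∈ U, ENNReal.ofReal (2 * (2 * τ + 1) * r b) := by
          apply Finset.sum_congr rfl
          intro b hb
          rw [Real.volume_closedBall]
          congr 1
          ring
  have hsumU : S ≤ 2 * (2 * τ + 1) * ∑ b ∈ U, r b := by
    have := hsum1
    have hnn : ∀ b ∈ U, (0:ℝ) ≤ 2 * (2 * τ + 1) * r b := fun b hb =>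
      mul_nonneg (by nlinarith [hτ]) (hr b (hUJ b hb)).le
    rw [← ENNReal.ofReal_sum_of_nonneg hnn] at this
    rw [ENNReal.ofReal_le_ofReal_iff (Finset.sum_nonneg hnn)] at this
    calc S ≤ ∑ b ∈ U, 2 * (2 * τ + 1) * r b := this
      _ = 2 * (2 * τ + 1) * ∑ b ∈ U, r b := by rw [Finset.mul_sum]
  -- lower bound for volume A
  have hAlower : ENNReal.ofReal (2 * c₂ * ∑ b ∈ U, r b) ≤ volume A := by
    calc ENNReal.ofReal (2 * c₂ * ∑ b ∈ U, r b)
        = ∑ b ∈ U, ENNReal.ofReal (c₂ * (2 * r b)) := by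
          rw [← ENNReal.ofReal_sum_of_nonneg (fun b hb => by
            have := (hr b (hUJ b hb)).le; positivity)]
          congr 1
          rw [Finset.mul_sum]
          apply Finset.sum_congr rfl
          intro b _
          ring
      _ ≤ ∑ b ∈ U, volume (A ∩ Icc (t b - 2 * r b) (t b)) :=
          Finset.sum_le_sum (fun b hb => hfrac b (hUJ b hb))
      _ = volume (⋃ b ∈ U, A ∩ Icc (t b - 2 * r b) (t b)) := by
          rw [measure_biUnion_finset]
          · intro i hi j hj hij
            have : Disjoint (Metric.closedBall (t i - r i) (r i))
                (Metric.closedBall (t j - r j) (r j)) :=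
              hudisj (hufin.mem_toFinset.mp hi) (hufin.mem_toFinset.mp hj) hij
            rw [hball, hball] at this
            exact (this.mono (inter_subset_right) (inter_subset_right))
          · exact fun b _ => hA.inter measurableSet_Icc
      _ ≤ volume A := by
          apply measure_mono
          intro x hx
          simp only [mem_iUnion] at hx
          obtain ⟨b, _, hxb, _⟩ := hx
          exact hxb
  refine le_trans ?_ hAlower
  apply ENNReal.ofReal_le_ofReal
  have hτeq : 2 * (2 * τ + 1) = 6 * S / c₁ := by
    rw [hτdef]; field_simp; ring
  have h6 : 0 < 6 * S / c₁ := by positivity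
  have hsumr : c₁ / 6 ≤ ∑ b ∈ U, r b := by
    rw [hτeq] at hsumU
    have h' : S * c₁ ≤ 6 * S * ∑ b ∈ U, r b := by
      calc S * c₁ ≤ (6 * S / c₁ * ∑ b ∈ U, r b) * c₁ :=
            mul_le_mul_of_nonneg_right hsumU hc₁.le
        _ = 6 * S * ∑ b ∈ U, r b := by field_simp
    rw [div_le_iff₀ (by norm_num : (0:ℝ) < 6)]
    nlinarith [h', hSpos]
  calc c₁ * c₂ / 3 = 2 * c₂ * (c₁ / 6) := by ring
    _ ≤ 2 * c₂ * ∑ b ∈ U, r b := by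
        apply mul_le_mul_of_nonneg_left hsumr (by positivity)
end

section
/- Let u : ℝ → ℝ be bounded and continuous on (−∞, t₀], and suppose φ ∈ C^{0,γ} with α < γ ≤ 1 satisfies φ ≥ u on [t₀ − ε, t₀] and φ(t₀) = u(t₀). Let K(t,s) be a kernel satisfying (αλ/Γ(1−α)) (t−s)^{−1−α} ≤ K(t,s) ≤ (αΛ/Γ(1−α)) (t−s)^{−1−α}. Then the integral ∫_{−∞}^{t₀} [u(t₀)−u(s)] K(t₀,s) ds is bounded below by a finite constant (depending on ‖u‖_∞, ‖φ‖_{C^{0,γ}}, ε, α, γ, Λ), i.e., it is well defined with values in (−∞, +∞]. -/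
open MeasureTheory Set

lemma aux_mp (t₀ : ℝ) : MeasurePreserving (fun x : ℝ => t₀ - x) volume volume := by
  have h1 := Measure.measurePreserving_neg (volume : Measure ℝ)
  have h2 : MeasurePreserving (fun x : ℝ => t₀ + x) volume volume :=
    measurePreserving_add_left volume t₀
  simpa [Function.comp_def, sub_eq_add_neg] using h2.comp h1

lemma aux_emb (t₀ : ℝ) : MeasurableEmbedding (fun x : ℝ => t₀ - x) :=
  (Homeomorph.subLeft t₀).measurableEmbedding

/-- Tail integrability of `(t₀ - s)^p` for `p < -1`. -/
lemma aux_tail (t₀ c p : ℝ) (hp : p < -1) (hc : 0 < c) :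
    IntegrableOn (fun s : ℝ => (t₀ - s) ^ p) (Iio (t₀ - c)) := by
  have h : IntegrableOn (fun x : ℝ => x ^ p) (Ioi c) := integrableOn_Ioi_rpow_of_lt hp hc
  have := ((aux_mp t₀).integrableOn_comp_preimage (aux_emb t₀)).2 h
  have hset : (fun x : ℝ => t₀ - x) ⁻¹' (Ioi c) = Iio (t₀ - c) := by
    ext x; simp [lt_sub_iff_add_lt, sub_lt_iff_lt_add, lt_sub_comm]
  rwa [hset] at this

/-- Near-diagonal integrability of `(t₀ - s)^p` for `p > -1`. -/
lemma aux_near (t₀ c p : ℝ) (hp : -1 < p) (hc : 0 < c) :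
    IntegrableOn (fun s : ℝ => (t₀ - s) ^ p) (Ico (t₀ - c) t₀) := by
  have h : IntegrableOn (fun x : ℝ => x ^ p) (Ioc 0 c) := by
    have := intervalIntegral.intervalIntegrable_rpow' (a := 0) (b := c) hp
    rwa [intervalIntegrable_iff_integrableOn_Ioc_of_le hc.le] at this
  have := ((aux_mp t₀).integrableOn_comp_preimage (aux_emb t₀)).2 h
  have hset : (fun x : ℝ => t₀ - x) ⁻¹' (Ioc 0 c) = Ico (t₀ - c) t₀ := by
    ext x
    simp only [mem_preimage, mem_Ioc, mem_Ico]
    constructor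
    · rintro ⟨h1, h2⟩; constructor <;> linarith
    · rintro ⟨h1, h2⟩; constructor <;> linarith
  rwa [hset] at this

/-- If `φ` is `γ`-Hölder with `γ > α` and touches the bounded continuous function `u`
from above at `t₀`, then for a kernel `K` comparable to `(t-s)^{-1-α}`, the negative part
of the integrand `(u(t₀)-u(s)) K(t₀,s)` is integrable on `(-∞,t₀)`; hence the integral
`∫_{-∞}^{t₀} (u(t₀)-u(s)) K(t₀,s) ds` is well defined with values in `(-∞,+∞]`. -/
theorem stmt_6 (α γ lam Lam : ℝ) (hα0 : 0 < α) (hα1 : α < 1)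
    (hγl : α < γ) (hγu : γ ≤ 1) (hlam : 0 < lam) (hlamLam : lam ≤ Lam)
    (t₀ ε : ℝ) (hε : 0 < ε)
    (u φ : ℝ → ℝ) (M : ℝ) (hbdd : ∀ t ≤ t₀, |u t| ≤ M)
    (hcont : ContinuousOn u (Iic t₀)) (Cφ : ℝ)
    (hφHolder : ∀ a ∈ Icc (t₀ - ε) t₀, ∀ b ∈ Icc (t₀ - ε) t₀,
      |φ a - φ b| ≤ Cφ * |a - b| ^ γ)
    (hφu : ∀ s ∈ Icc (t₀ - ε) t₀, u s ≤ φ s) (htouch : φ t₀ = u t₀)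
    (K : ℝ → ℝ → ℝ) (hKmeas : Measurable (K t₀))
    (hK : ∀ t s : ℝ, s < t →
      α * lam / Real.Gamma (1 - α) * (t - s) ^ (-(1 + α)) ≤ K t s ∧
      K t s ≤ α * Lam / Real.Gamma (1 - α) * (t - s) ^ (-(1 + α))) :
    IntegrableOn (fun s => max (u s - u t₀) 0 * K t₀ s) (Iio t₀) := by
  have hΓ : 0 < Real.Gamma (1 - α) := Real.Gamma_pos_of_pos (by linarith)
  set C1 : ℝ := α * Lam / Real.Gamma (1 - α) with hC1
  have hC1pos : 0 < C1 := by
    apply div_pos (mul_pos hα0 (lt_of_lt_of_le hlam hlamLam)) hΓ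
  have hM : 0 ≤ M := (abs_nonneg _).trans (hbdd t₀ le_rfl)
  have hCφ : 0 ≤ Cφ := by
    have h := hφHolder (t₀ - ε) ⟨le_refl _, by linarith⟩ t₀ ⟨by linarith, le_refl _⟩
    have habs : |(t₀ - ε) - t₀| = ε := by rw [abs_sub_comm]; simp [abs_of_pos hε]
    rw [habs] at h
    have hεγ : 0 < ε ^ γ := Real.rpow_pos_of_pos hε γ
    nlinarith [abs_nonneg (φ (t₀ - ε) - φ t₀)]
  -- measurability
  have hmeas : AEStronglyMeasurable (fun s => max (u s - u t₀) 0 * K t₀ s)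
      (volume.restrict (Iio t₀)) := by
    have h1 : AEMeasurable u (volume.restrict (Iio t₀)) :=
      ((hcont.mono Iio_subset_Iic_self).aestronglyMeasurable measurableSet_Iio).aemeasurable
    exact (((h1.sub aemeasurable_const).max aemeasurable_const).mul
      hKmeas.aemeasurable).aestronglyMeasurable
  -- pointwise bounds
  have hKpos : ∀ s < t₀, 0 ≤ K t₀ s := by
    intro s hs
    refine le_trans ?_ (hK t₀ s hs).1
    apply mul_nonneg (by positivity) (Real.rpow_nonneg (by linarith) _)
  have hKle : ∀ s < t₀, K t₀ s ≤ C1 * (t₀ - s) ^ (-(1 + α)) := fun s hs => (hK t₀ s hs).2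
  -- split
  rw [show Iio t₀ = Iio (t₀ - ε) ∪ Ico (t₀ - ε) t₀ by
    rw [Iio_union_Ico_eq_Iio]; linarith]
  apply IntegrableOn.union
  · -- tail part
    have hint : IntegrableOn (fun s : ℝ => 2 * M * C1 * (t₀ - s) ^ (-(1 + α)))
        (Iio (t₀ - ε)) := (aux_tail t₀ ε (-(1 + α)) (by linarith) hε).const_mul _
    refine Integrable.mono' hint (hmeas.mono_measure
      (Measure.restrict_mono (fun x hx => by simp only [mem_Iio] at *; linarith) le_rfl)) ?_
    filter_upwards [ae_restrict_mem measurableSet_Iio] with s hs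
    simp only [mem_Iio] at hs
    have hst : s < t₀ := by linarith
    have h0 : 0 ≤ max (u s - u t₀) 0 := le_max_right _ _
    rw [Real.norm_eq_abs, abs_of_nonneg (mul_nonneg h0 (hKpos s hst))]
    have hmax : max (u s - u t₀) 0 ≤ 2 * M := by
      apply max_le _ (by linarith)
      have h1 := abs_le.1 (hbdd s hst.le)
      have h2 := abs_le.1 (hbdd t₀ le_rfl)
      linarith [h1.2, h2.1]
    calc max (u s - u t₀) 0 * K t₀ s ≤ (2 * M) * (C1 * (t₀ - s) ^ (-(1 + α))) := by
          apply mul_le_mul hmax (hKle s hst) (hKpos s hst)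
          linarith
      _ = 2 * M * C1 * (t₀ - s) ^ (-(1 + α)) := by ring
  · -- near part
    have hint : IntegrableOn (fun s : ℝ => Cφ * C1 * (t₀ - s) ^ (γ - (1 + α)))
        (Ico (t₀ - ε) t₀) := (aux_near t₀ ε (γ - (1 + α)) (by linarith) hε).const_mul _
    refine Integrable.mono' hint (hmeas.mono_measure
      (Measure.restrict_mono (fun x hx => by
        simp only [mem_Ico, mem_Iio] at *; exact hx.2) le_rfl)) ?_
    filter_upwards [ae_restrict_mem measurableSet_Ico] with s hs
    obtain ⟨hs1, hs2⟩ := hs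
    have hst : 0 < t₀ - s := by linarith
    have h0 : 0 ≤ max (u s - u t₀) 0 := le_max_right _ _
    rw [Real.norm_eq_abs, abs_of_nonneg (mul_nonneg h0 (hKpos s hs2))]
    have hmax : max (u s - u t₀) 0 ≤ Cφ * (t₀ - s) ^ γ := by
      apply max_le
      · have h1 : u s ≤ φ s := hφu s ⟨hs1, hs2.le⟩
        have h2 := hφHolder s ⟨hs1, hs2.le⟩ t₀ ⟨by linarith, le_refl _⟩
        have habs : |s - t₀| = t₀ - s := by rw [abs_sub_comm, abs_of_pos hst]
        rw [habs] at h2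
        have := (abs_le.1 h2).2
        linarith [neg_abs_le (φ s - φ t₀), (le_abs_self (φ s - φ t₀)).trans h2]
      · positivity
    calc max (u s - u t₀) 0 * K t₀ s
        ≤ (Cφ * (t₀ - s) ^ γ) * (C1 * (t₀ - s) ^ (-(1 + α))) := by
          apply mul_le_mul hmax (hKle s hs2) (hKpos s hs2)
          positivity
      _ = Cφ * C1 * ((t₀ - s) ^ γ * (t₀ - s) ^ (-(1 + α))) := by ring
      _ = Cφ * C1 * (t₀ - s) ^ (γ - (1 + α)) := by
          rw [← Real.rpow_add hst]; ring_nf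
end

section
/- Define u(t) := t^{α−1} for t > 0 and u(t) := 0 for t ≤ 0, where 0 < α < 1. Then for every t ∈ ℝ with t > 0, the Marchaud/Caputo derivative (α/Γ(1−α)) ∫_{−∞}^t [u(t)−u(s)]/(t−s)^{1+α} ds equals 0. -/
open MeasureTheory Set Filter Topology

/-- For `u(t) = t^{α-1}` (`t > 0`), `u(t) = 0` (`t ≤ 0`), the Marchaud derivative
of order `α` vanishes at every `t > 0`. -/
theorem stmt_10 (α : ℝ) (hα0 : 0 < α) (hα1 : α < 1)
    (u : ℝ → ℝ) (hu : ∀ t : ℝ, u t = if 0 < t then t ^ (α - 1) else 0) :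
    ∀ t : ℝ, 0 < t →
      (α / Real.Gamma (1 - α)) * ∫ s in Iio t, (u t - u s) / (t - s) ^ (1 + α) = 0 := by
  intro t ht
  have hαne : α ≠ 0 := ne_of_gt hα0
  have htne : t ≠ 0 := ne_of_gt ht
  set f : ℝ → ℝ := fun s => (u t - u s) / (t - s) ^ (1 + α) with hf
  set φ : ℝ → ℝ := fun x => f (-x) with hφdef
  -- antiderivatives
  set G : ℝ → ℝ := fun x => -((t ^ α - (-x) ^ α) * (t + x) ^ (-α)) / (α * t) with hG
  set H : ℝ → ℝ := fun x => -(t ^ (α - 1) * (t + x) ^ (-α)) / α with hH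
  have hut : u t = t ^ (α - 1) := by rw [hu]; simp [ht]
  -- derivative of G on Ioo (-t) 0
  have hGderiv : ∀ x ∈ Ioo (-t) 0, HasDerivAt G (φ x) x := by
    intro x hx
    have hx0 : (0:ℝ) < -x := by linarith [hx.2]
    have htx : (0:ℝ) < t + x := by linarith [hx.1]
    have hA : HasDerivAt (fun x : ℝ => (-x) ^ α) (α * (-x) ^ (α - 1) * (-1)) x :=
      (Real.hasDerivAt_rpow_const (p := α) (Or.inl (ne_of_gt hx0))).comp x (hasDerivAt_neg x)
    have hB : HasDerivAt (fun x : ℝ => (t + x) ^ (-α)) ((-α) * (t + x) ^ (-α - 1) * 1) x :=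
      (Real.hasDerivAt_rpow_const (p := -α) (Or.inl (ne_of_gt htx))).comp x
        ((hasDerivAt_id x).const_add t)
    have hD := (((hA.const_sub (t ^ α)).mul hB).neg).div_const (α * t)
    convert hD using 1
    iterate 3 rfl
    have hux : u (-x) = (-x) ^ (α - 1) := by rw [hu]; simp [hx0]
    have hne : (t + x) ^ (1 + α) ≠ 0 := ne_of_gt (Real.rpow_pos_of_pos htx _)
    have hinv1 : (t + x) ^ (-α) = (t + x) * ((t + x) ^ (1 + α))⁻¹ := by
      rw [show (-α : ℝ) = 1 + -(1 + α) by ring, Real.rpow_add htx, Real.rpow_one,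
        Real.rpow_neg htx.le]
    have hinv2 : (t + x) ^ (-α - 1) = ((t + x) ^ (1 + α))⁻¹ := by
      rw [show (-α - 1 : ℝ) = -(1 + α) by ring, Real.rpow_neg htx.le]
    have e1 : (-x) ^ (α - 1) * (-x) = (-x) ^ α := by
      rw [← Real.rpow_add_one (ne_of_gt hx0) (α - 1), sub_add_cancel]
    have e2 : t ^ (α - 1) * t = t ^ α := by
      rw [← Real.rpow_add_one htne (α - 1), sub_add_cancel]
    show (u t - u (-x)) / (t - -x) ^ (1 + α) = _
    rw [hux, hut, show t - -x = t + x by ring, hinv1, hinv2]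
    field_simp
    linear_combination e2 - e1
  -- derivative of H on Ioi 0
  have hHderiv : ∀ x ∈ Ioi (0:ℝ), HasDerivAt H (φ x) x := by
    intro x hx
    have hx0 : (0:ℝ) < x := hx
    have htx : (0:ℝ) < t + x := by linarith
    have hB : HasDerivAt (fun x : ℝ => (t + x) ^ (-α)) ((-α) * (t + x) ^ (-α - 1) * 1) x :=
      (Real.hasDerivAt_rpow_const (p := -α) (Or.inl (ne_of_gt htx))).comp x
        ((hasDerivAt_id x).const_add t)
    have hD := (((hB.const_mul (t ^ (α - 1))).neg).div_const α)
    convert hD using 1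
    iterate 3 rfl
    have hux : u (-x) = 0 := by rw [hu]; simp [not_lt.2 (neg_nonpos.2 hx0.le)]
    have hr : (t - -x) ^ (1 + α) = (t + x) ^ (1 + α) := by ring_nf
    have hinv : (t + x) ^ (-α - 1) = ((t + x) ^ (1 + α))⁻¹ := by
      rw [show (-α - 1 : ℝ) = -(1 + α) by ring, Real.rpow_neg htx.le]
    have hne : (t + x) ^ (1 + α) ≠ 0 := ne_of_gt (Real.rpow_pos_of_pos htx _)
    show (u t - u (-x)) / (t - -x) ^ (1 + α) = _
    rw [hux, hut, hr, hinv]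
    field_simp
    ring
  -- limit of G at (-t)⁺ is 0
  have hGlim : Tendsto G (𝓝[>] (-t)) (𝓝 0) := by
    have hneg : Tendsto (fun x : ℝ => -x) (𝓝[>] (-t)) (𝓝[<] t) := by
      apply tendsto_nhdsWithin_of_tendsto_nhds_of_eventually_within
      · simpa using (continuous_neg.tendsto (-t)).mono_left nhdsWithin_le_nhds
      · filter_upwards [self_mem_nhdsWithin] with y hy
        have : -t < y := hy
        simp only [mem_Iio]
        linarith
    have hslope : Tendsto (slope (fun y : ℝ => y ^ α) t) (𝓝[≠] t) (𝓝 (α * t ^ (α - 1))) :=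
      hasDerivAt_iff_tendsto_slope.1 (Real.hasDerivAt_rpow_const (p := α) (Or.inl htne))
    have hs := hslope.comp (hneg.mono_right (nhdsWithin_mono _ (fun y hy => ne_of_lt hy)))
    have hadd : Tendsto (fun x : ℝ => t + x) (𝓝[>] (-t)) (𝓝 0) := by
      have h0 : Tendsto (fun x : ℝ => t + x) (𝓝 (-t)) (𝓝 (t + -t)) :=
        ((continuous_const.add continuous_id).tendsto (-t))
      rw [add_neg_cancel] at h0
      exact h0.mono_left nhdsWithin_le_nhds
    have h1α : (0:ℝ) < 1 - α := by linarith
    have hpow : Tendsto (fun x : ℝ => (t + x) ^ (1 - α)) (𝓝[>] (-t)) (𝓝 0) := by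
      have hc : ContinuousAt (fun y : ℝ => y ^ (1 - α)) 0 :=
        Real.continuousAt_rpow_const 0 _ (Or.inr h1α.le)
      have := hc.tendsto.comp hadd
      simpa [Function.comp_def, Real.zero_rpow (ne_of_gt h1α)] using this
    have hcomb := ((hs.mul hpow).neg).div_const (α * t)
    have hcomb0 : Tendsto (fun x : ℝ =>
        -((slope (fun y : ℝ => y ^ α) t ∘ fun x => -x) x * (t + x) ^ (1 - α)) / (α * t))
        (𝓝[>] (-t)) (𝓝 0) := by simpa using hcomb
    apply hcomb0.congr'
    filter_upwards [self_mem_nhdsWithin] with x hx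
    have htx : (0:ℝ) < t + x := by have : -t < x := hx; linarith
    have hxt : -x - t ≠ 0 := by intro h; apply absurd htx; rw [show t + x = -(-x - t) by ring, h]; simp
    have h3 : (t + x) ^ (1 - α) = (t + x) * (t + x) ^ (-α) := by
      rw [show (1 - α : ℝ) = 1 + -α by ring, Real.rpow_add htx, Real.rpow_one]
    show -((slope (fun y : ℝ => y ^ α) t (-x)) * (t + x) ^ (1 - α)) / (α * t) = G x
    rw [slope_def_field, hG, h3]
    have hαt : (α * t) ≠ 0 := by positivity
    have hpne : ((t + x) ^ (-α)) ≠ 0 := ne_of_gt (Real.rpow_pos_of_pos htx _)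
    field_simp
    ring
  -- continuity of G at 0, value -1/(α t)
  have hGcont0 : ContinuousAt G 0 := by
    have hA : ContinuousAt (fun x : ℝ => (-x) ^ α) 0 :=
      continuous_neg.continuousAt.rpow_const (Or.inr hα0.le)
    have hB : ContinuousAt (fun x : ℝ => (t + x) ^ (-α)) 0 :=
      (Real.continuousAt_rpow_const _ _ (Or.inl (by simpa using htne))).comp
        (continuous_const.add continuous_id).continuousAt
    exact (((continuousAt_const.sub hA).mul hB).neg).div_const _
  -- φ nonpos on Ioo (-t) 0
  have hφnonpos : ∀ x ∈ Ioo (-t) 0, φ x ≤ 0 := by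
    intro x hx
    have hx0 : (0:ℝ) < -x := by linarith [hx.2]
    have hxt : -x ≤ t := by linarith [hx.1]
    have hux : u (-x) = (-x) ^ (α - 1) := by rw [hu]; simp [hx0]
    have hle : t ^ (α - 1) ≤ (-x) ^ (α - 1) :=
      Real.rpow_le_rpow_of_nonpos hx0 hxt (by linarith)
    have : u t - u (-x) ≤ 0 := by rw [hux, hut]; linarith
    exact div_nonpos_of_nonpos_of_nonneg this (Real.rpow_nonneg (by linarith [hx.1]) _)
  -- φ nonneg on Ioi 0
  have hφnonneg : ∀ x ∈ Ioi (0:ℝ), 0 ≤ φ x := by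
    intro x hx
    have hx0 : (0:ℝ) < x := hx
    have hux : u (-x) = 0 := by rw [hu]; simp [not_lt.2 (neg_nonpos.2 hx0.le)]
    apply div_nonneg _ (Real.rpow_nonneg (by linarith) _)
    rw [hux, hut, sub_zero]
    positivity
  -- H tends to 0 at top
  have hHtop : Tendsto H atTop (𝓝 0) := by
    have h1 : Tendsto (fun x : ℝ => (t + x) ^ (-α)) atTop (𝓝 0) :=
      (tendsto_rpow_neg_atTop hα0).comp (tendsto_atTop_add_const_left _ t tendsto_id)
    have := ((h1.const_mul (t ^ (α - 1))).neg).div_const α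
    simpa using this
  have hHcont : ContinuousWithinAt H (Ici 0) 0 := by
    apply ContinuousAt.continuousWithinAt
    have hB : ContinuousAt (fun x : ℝ => (t + x) ^ (-α)) 0 :=
      (Real.continuousAt_rpow_const _ _ (Or.inl (by simpa using htne))).comp
        (continuous_const.add continuous_id).continuousAt
    exact ((hB.const_mul (t ^ (α - 1))).neg).div_const α
  -- Continuity of G on Icc (-t) 0
  have hGcontOn : ContinuousOn G (Icc (-t) 0) := by
    intro x hx
    by_cases hx1 : x = -t
    · subst hx1
      have hGt : G (-t) = 0 := by simp [hG]
      have : ContinuousWithinAt G (Ici (-t)) (-t) := by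
        rw [← continuousWithinAt_Ioi_iff_Ici]
        unfold ContinuousWithinAt
        rw [hGt]
        exact hGlim
      exact this.mono (fun y hy => hy.1)
    · rcases eq_or_lt_of_le hx.2 with rfl | h2
      · exact hGcont0.continuousWithinAt
      · exact ((hGderiv x ⟨lt_of_le_of_ne hx.1 (Ne.symm hx1), h2⟩).continuousAt).continuousWithinAt
  have hmt0 : (-t : ℝ) ≤ 0 := by linarith
  have hmtlt : (-t : ℝ) < 0 := by linarith
  -- integrability on Ioc (-t) 0
  have hint1 : IntervalIntegrable φ volume (-t) 0 := by
    have := intervalIntegral.intervalIntegrable_deriv_of_nonneg (g := fun x => -G x) (g' := fun x => -φ x)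
      (a := -t) (b := 0) ?_ ?_ ?_
    · have h2 := this.neg
      have he : (-fun x => -φ x) = φ := by funext x; simp
      rwa [he] at h2
    · rw [uIcc_of_le hmt0]; exact hGcontOn.neg
    · intro x hx
      rw [min_eq_left hmt0, max_eq_right hmt0] at hx
      exact (hGderiv x hx).neg
    · intro x hx
      rw [min_eq_left hmt0, max_eq_right hmt0] at hx
      simpa using hφnonpos x hx
  have hint2 : IntegrableOn φ (Ioi 0) := by
    exact integrableOn_Ioi_deriv_of_nonneg hHcont hHderiv hφnonneg hHtop
  -- the two pieces
  have hpiece1 : ∫ x in Ioc (-t) 0, φ x = G 0 - 0 := by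
    rw [← intervalIntegral.integral_of_le hmt0]
    exact intervalIntegral.integral_eq_sub_of_hasDerivAt_of_tendsto hmtlt hGderiv hint1
      hGlim (hGcont0.continuousWithinAt.mono (fun y _ => trivial)).tendsto
  have hpiece2 : ∫ x in Ioi 0, φ x = 0 - H 0 :=
    integral_Ioi_of_hasDerivAt_of_nonneg hHcont hHderiv hφnonneg hHtop
  have hsplit : ∫ x in Ioi (-t), φ x = (G 0 - 0) + (0 - H 0) := by
    rw [← hpiece1, ← hpiece2, ← setIntegral_union (Ioc_disjoint_Ioi le_rfl) measurableSet_Ioi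
      hint1.1 hint2, Ioc_union_Ioi_eq_Ioi hmt0]
  have hval : G 0 - 0 + (0 - H 0) = 0 := by
    have e1 : t ^ α * t ^ (-α) = 1 := by
      rw [← Real.rpow_add ht]; simp
    have e2 : t ^ (α - 1) * t ^ (-α) = t⁻¹ := by
      rw [← Real.rpow_add ht, show α - 1 + -α = -1 by ring, Real.rpow_neg_one]
    simp only [hG, hH, neg_zero, Real.zero_rpow hαne, add_zero, sub_zero, zero_sub]
    rw [e2] at *
    field_simp
    rw [e1]
    ring
  have key : ∫ s in Iio t, f s = 0 := by
    have hc := integral_comp_neg_Ioi (-t) f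
    rw [neg_neg] at hc
    rw [← integral_Iic_eq_integral_Iio, ← hc]
    rw [show (fun x => f (-x)) = φ from rfl] at *
    rw [hsplit, hval]
  rw [hf] at key
  rw [key, mul_zero]
end

section
/- For any continuous function h on [−2, 0] and any t ∈ (−2, 0], one has lim_{α→1⁻} (α/Γ(1−α)) ∫_{−2}^t h(s)/(t−s)^α ds = h(t). -/
open MeasureTheory Set Filter

lemma aux_rpow_integral {b α : ℝ} (hb : 0 ≤ b) (hα : α < 1) :
    ∫ u in Ioc (0:ℝ) b, u ^ (-α) = b ^ (1 - α) / (1 - α) := by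
  rw [← intervalIntegral.integral_of_le hb, integral_rpow (Or.inl (by linarith))]
  rw [Real.zero_rpow (by linarith : -α + 1 ≠ 0)]
  ring_nf

lemma aux_integrableOn {f : ℝ → ℝ} {a b α : ℝ} (hα : α < 1)
    (hf : ContinuousOn f (Icc a b)) :
    IntegrableOn (fun u => f u * u ^ (-α)) (Ioc a b) := by
  rcases le_or_gt b a with hba | hab
  · rw [Set.Ioc_eq_empty (by exact not_lt.mpr hba)]
    simp [IntegrableOn]
  obtain ⟨M, hM⟩ := (isCompact_Icc : IsCompact (Icc a b)).exists_bound_of_continuousOn hf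
  have hint : IntegrableOn (fun u : ℝ => u ^ (-α)) (Ioc a b) :=
    (intervalIntegral.intervalIntegrable_rpow' (by linarith) (a := a) (b := b)).1
  refine hint.bdd_mul (c := M) ?_ ?_
  · exact (hf.mono Ioc_subset_Icc_self).aestronglyMeasurable measurableSet_Ioc
  · filter_upwards [ae_restrict_mem measurableSet_Ioc] with x hx
    exact hM x (Ioc_subset_Icc_self hx)

lemma aux_remainder {g : ℝ → ℝ} {T : ℝ} (hT : 0 < T) (hT2 : T ≤ 2)
    (hg : ContinuousOn g (Icc 0 T)) (hg0 : g 0 = 0) :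
    Tendsto (fun α => (1 - α) * ∫ u in Ioc (0:ℝ) T, g u * u ^ (-α))
      (nhdsWithin 1 (Iio 1)) (nhds 0) := by
  rw [NormedAddCommGroup.tendsto_nhds_zero]
  intro ε hε
  obtain ⟨M, hM⟩ := (isCompact_Icc : IsCompact (Icc (0:ℝ) T)).exists_bound_of_continuousOn hg
  have hM0 : 0 ≤ M := le_trans (norm_nonneg _) (hM 0 ⟨le_rfl, hT.le⟩)
  -- pick δ
  have hc0 : ContinuousWithinAt g (Icc 0 T) 0 := hg 0 ⟨le_rfl, hT.le⟩
  rw [Metric.continuousWithinAt_iff] at hc0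
  obtain ⟨δ0, hδ0pos, hδ0⟩ := hc0 (ε/4) (by positivity)
  set δ : ℝ := min (δ0/2) T with hδdef
  have hδpos : 0 < δ := lt_min (by positivity) hT
  have hδT : δ ≤ T := min_le_right _ _
  have hδ2 : δ ≤ 2 := hδT.trans hT2
  have hgsmall : ∀ u ∈ Ioc (0:ℝ) δ, ‖g u‖ ≤ ε/4 := by
    intro u hu
    have h1 : u ∈ Icc (0:ℝ) T := ⟨hu.1.le, hu.2.trans hδT⟩
    have h2 : dist u 0 < δ0 := by
      rw [Real.dist_eq, sub_zero, abs_of_pos hu.1]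
      exact lt_of_le_of_lt (hu.2.trans (min_le_left _ _)) (by linarith)
    have := hδ0 h1 h2
    rw [hg0, dist_zero_right] at this
    exact this.le
  -- eventually facts
  have hfilter : Tendsto (fun α : ℝ => (1 - α) * ((T - δ) * (M * δ ^ (-α))))
      (nhdsWithin 1 (Iio 1)) (nhds 0) := by
    have hδrp : Continuous fun α : ℝ => δ ^ (-α) := by
      simp only [Real.rpow_def_of_pos hδpos]
      fun_prop
    have : Continuous fun α : ℝ => (1 - α) * ((T - δ) * (M * δ ^ (-α))) := by fun_prop
    have h0 : (fun α : ℝ => (1 - α) * ((T - δ) * (M * δ ^ (-α)))) 1 = 0 := by simp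
    simpa [h0] using (this.continuousAt (x := 1)).tendsto.mono_left nhdsWithin_le_nhds
  have E2 : ∀ᶠ α in nhdsWithin (1:ℝ) (Iio 1),
      (1 - α) * ((T - δ) * (M * δ ^ (-α))) < ε/4 :=
    hfilter.eventually_lt_const (by positivity)
  have E1 : ∀ᶠ α in nhdsWithin (1:ℝ) (Iio 1), α ∈ Ioo (0:ℝ) 1 := by
    filter_upwards [self_mem_nhdsWithin,
      mem_nhdsWithin_of_mem_nhds (Ioi_mem_nhds one_pos)] with α h1 h2
    exact ⟨h2, h1⟩
  filter_upwards [E1, E2] with α hα hα2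
  obtain ⟨hα0, hα1⟩ := hα
  have h1α : (0:ℝ) < 1 - α := by linarith
  have int1 : IntegrableOn (fun u => g u * u ^ (-α)) (Ioc 0 δ) :=
    aux_integrableOn hα1 (hg.mono (Icc_subset_Icc le_rfl hδT))
  have int2 : IntegrableOn (fun u => g u * u ^ (-α)) (Ioc δ T) :=
    aux_integrableOn hα1 (hg.mono (Icc_subset_Icc hδpos.le le_rfl))
  have hrint1 : IntegrableOn (fun u : ℝ => u ^ (-α)) (Ioc 0 δ) :=
    (intervalIntegral.intervalIntegrable_rpow' (by linarith) (a := 0) (b := δ)).1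
  have hsplit : (∫ u in Ioc (0:ℝ) T, g u * u ^ (-α))
      = (∫ u in Ioc (0:ℝ) δ, g u * u ^ (-α)) + ∫ u in Ioc δ T, g u * u ^ (-α) := by
    rw [← setIntegral_union (Set.Ioc_disjoint_Ioc_of_le le_rfl) measurableSet_Ioc int1 int2,
      Ioc_union_Ioc_eq_Ioc hδpos.le hδT]
  have b1 : ‖∫ u in Ioc (0:ℝ) δ, g u * u ^ (-α)‖ ≤ (ε/4) * (δ ^ (1-α) / (1-α)) := by
    calc ‖∫ u in Ioc (0:ℝ) δ, g u * u ^ (-α)‖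
        ≤ ∫ u in Ioc (0:ℝ) δ, ‖g u * u ^ (-α)‖ := norm_integral_le_integral_norm _
      _ ≤ ∫ u in Ioc (0:ℝ) δ, (ε/4) * u ^ (-α) := by
          refine setIntegral_mono_on int1.norm (hrint1.const_mul _) measurableSet_Ioc ?_
          intro u hu
          rw [norm_mul]
          have hnn : ‖u ^ (-α)‖ = u ^ (-α) := by
            rw [Real.norm_eq_abs, abs_of_nonneg (Real.rpow_nonneg hu.1.le _)]
          rw [hnn]
          exact mul_le_mul_of_nonneg_right (hgsmall u hu) (Real.rpow_nonneg hu.1.le _)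
      _ = (ε/4) * (δ ^ (1-α) / (1-α)) := by
          rw [MeasureTheory.integral_const_mul, aux_rpow_integral hδpos.le hα1]
  have b2 : ‖∫ u in Ioc δ T, g u * u ^ (-α)‖ ≤ (T - δ) * (M * δ ^ (-α)) := by
    calc ‖∫ u in Ioc δ T, g u * u ^ (-α)‖
        ≤ ∫ u in Ioc δ T, ‖g u * u ^ (-α)‖ := norm_integral_le_integral_norm _
      _ ≤ ∫ _u in Ioc δ T, M * δ ^ (-α) := by
          refine setIntegral_mono_on int2.norm
            (integrableOn_const measure_Ioc_lt_top.ne) measurableSet_Ioc ?_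
          intro u hu
          rw [norm_mul]
          have hnn : ‖u ^ (-α)‖ = u ^ (-α) := by
            rw [Real.norm_eq_abs,
              abs_of_nonneg (Real.rpow_nonneg (hδpos.trans hu.1).le _)]
          rw [hnn]
          exact mul_le_mul (hM u ⟨(hδpos.trans hu.1).le, hu.2⟩)
            (Real.rpow_le_rpow_of_nonpos hδpos hu.1.le (by linarith))
            (Real.rpow_nonneg (hδpos.trans hu.1).le _) hM0
      _ = (T - δ) * (M * δ ^ (-α)) := by
          rw [setIntegral_const, Real.volume_real_Ioc_of_le hδT, smul_eq_mul]
  have hδpow : δ ^ (1-α) ≤ 2 := by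
    calc δ ^ (1-α) ≤ 2 ^ (1-α) := Real.rpow_le_rpow hδpos.le hδ2 h1α.le
      _ ≤ 2 ^ (1:ℝ) := Real.rpow_le_rpow_of_exponent_le one_le_two (by linarith)
      _ = 2 := Real.rpow_one 2
  calc ‖(1-α) * ∫ u in Ioc (0:ℝ) T, g u * u ^ (-α)‖
      = (1-α) * ‖∫ u in Ioc (0:ℝ) T, g u * u ^ (-α)‖ := by
        rw [norm_mul, Real.norm_eq_abs (1-α), abs_of_pos h1α]
    _ ≤ (1-α) * ((ε/4) * (δ ^ (1-α) / (1-α)) + (T - δ) * (M * δ ^ (-α))) := by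
        refine mul_le_mul_of_nonneg_left ?_ h1α.le
        rw [hsplit]
        exact (norm_add_le _ _).trans (add_le_add b1 b2)
    _ = (ε/4) * δ ^ (1-α) + (1-α) * ((T - δ) * (M * δ ^ (-α))) := by
        field_simp
    _ < ε := by
        have h5 : (ε/4) * δ ^ (1-α) ≤ (ε/4) * 2 :=
          mul_le_mul_of_nonneg_left hδpow (by positivity)
        linarith

lemma aux_subst (h : ℝ → ℝ) (t α : ℝ) (ht : -2 ≤ t) :
    ∫ s in Ioc (-2:ℝ) t, h s / (t - s) ^ α = ∫ u in Ioc (0:ℝ) (t+2), h (t - u) / u ^ α := by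
  rw [← intervalIntegral.integral_of_le ht, ← intervalIntegral.integral_of_le (by linarith : (0:ℝ) ≤ t + 2)]
  have := intervalIntegral.integral_comp_sub_left (a := -2) (b := t)
    (fun u => h (t - u) / u ^ α) t
  rw [sub_self, sub_neg_eq_add] at this
  rw [← this]
  refine intervalIntegral.integral_congr fun s _ => ?_
  simp [sub_sub_cancel]

/-- For continuous `h` on `[-2,0]` and `t ∈ (-2,0]`,
`(α/Γ(1-α)) ∫_{-2}^t h(s)(t-s)^{-α} ds → h(t)` as `α → 1⁻`. -/
theorem stmt_17 (h : ℝ → ℝ) (hcont : ContinuousOn h (Icc (-2:ℝ) 0))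
    (t : ℝ) (ht : t ∈ Ioc (-2:ℝ) 0) :
    Tendsto (fun α : ℝ =>
        (α / Real.Gamma (1 - α)) * ∫ s in Ioc (-2:ℝ) t, h s / (t - s) ^ α)
      (nhdsWithin 1 (Iio 1)) (nhds (h t)) := by
  obtain ⟨ht2, ht0⟩ := ht
  set T : ℝ := t + 2 with hTdef
  have hT : 0 < T := by simp [hTdef]; linarith
  have hT2 : T ≤ 2 := by simp [hTdef]; linarith
  set g : ℝ → ℝ := fun u => h (t - u) - h t with hgdef
  have hgc : ContinuousOn (fun u : ℝ => h (t - u)) (Icc 0 T) := by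
    refine hcont.comp ((continuous_const.sub continuous_id).continuousOn) ?_
    intro u hu
    simp only [hTdef] at hu
    exact ⟨by linarith [hu.2], by linarith [hu.1]⟩
  have hgcont : ContinuousOn g (Icc 0 T) := hgc.sub continuousOn_const
  have hg0 : g 0 = 0 := by simp [hgdef]
  -- key identity on Ioo 0 1
  have key : ∀ α ∈ Ioo (0:ℝ) 1,
      (α / Real.Gamma (1 - α)) * ∫ s in Ioc (-2:ℝ) t, h s / (t - s) ^ α
      = (α / Real.Gamma (2 - α)) * (T ^ (1 - α)) * h t
        + (α / Real.Gamma (2 - α)) * ((1 - α) * ∫ u in Ioc (0:ℝ) T, g u * u ^ (-α)) := by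
    intro α hα
    obtain ⟨hα0, hα1⟩ := hα
    have h1α : (0:ℝ) < 1 - α := by linarith
    rw [aux_subst h t α (by linarith)]
    have step1 : (∫ u in Ioc (0:ℝ) (t + 2), h (t - u) / u ^ α)
        = ∫ u in Ioc (0:ℝ) T, h (t - u) * u ^ (-α) := by
      refine setIntegral_congr_fun measurableSet_Ioc fun u hu => ?_
      rw [Real.rpow_neg hu.1.le, div_eq_mul_inv]
    rw [step1]
    have step2 : (∫ u in Ioc (0:ℝ) T, h (t - u) * u ^ (-α))
        = h t * (T ^ (1 - α) / (1 - α)) + ∫ u in Ioc (0:ℝ) T, g u * u ^ (-α) := by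
      have e1 : (∫ u in Ioc (0:ℝ) T, h (t - u) * u ^ (-α))
          = ∫ u in Ioc (0:ℝ) T, (h t * u ^ (-α) + g u * u ^ (-α)) := by
        refine setIntegral_congr_fun measurableSet_Ioc fun u _ => ?_
        simp only [hgdef]; ring
      have i1 : IntegrableOn (fun u : ℝ => h t * u ^ (-α)) (Ioc 0 T) :=
        ((intervalIntegral.intervalIntegrable_rpow' (by linarith) (a := 0) (b := T)).1).const_mul _
      have i2 : IntegrableOn (fun u => g u * u ^ (-α)) (Ioc 0 T) :=
        aux_integrableOn hα1 hgcont
      rw [e1, integral_add i1 i2, MeasureTheory.integral_const_mul,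
        aux_rpow_integral hT.le hα1]
    rw [step2]
    have hΓpos : 0 < Real.Gamma (1 - α) := Real.Gamma_pos_of_pos h1α
    have hΓ2 : Real.Gamma (2 - α) = (1 - α) * Real.Gamma (1 - α) := by
      have := Real.Gamma_add_one (show (1:ℝ) - α ≠ 0 by linarith)
      rw [show (1:ℝ) - α + 1 = 2 - α by ring] at this
      exact this
    rw [hΓ2]
    field_simp
  -- limits
  have htends2 : Tendsto (fun α : ℝ => 2 - α) (nhdsWithin 1 (Iio 1)) (nhds 1) := by
    have hc : Continuous fun α : ℝ => 2 - α := by fun_prop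
    have h2 := (hc.tendsto (1:ℝ)).mono_left (nhdsWithin_le_nhds (s := Iio 1))
    norm_num at h2
    exact h2
  have hΓcont : ContinuousAt Real.Gamma 1 :=
    (Real.differentiableAt_Gamma fun m =>
      ne_of_gt (by have := Nat.cast_nonneg (α := ℝ) m; linarith)).continuousAt
  have hA : Tendsto (fun α : ℝ => α / Real.Gamma (2 - α))
      (nhdsWithin 1 (Iio 1)) (nhds 1) := by
    have hΓ : Tendsto (fun α : ℝ => Real.Gamma (2 - α)) (nhdsWithin 1 (Iio 1))
        (nhds 1) := by
      have := hΓcont.tendsto.comp htends2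
      simpa [Real.Gamma_one, Function.comp_def] using this
    have hid : Tendsto (fun α : ℝ => α) (nhdsWithin 1 (Iio 1)) (nhds 1) :=
      tendsto_id.mono_left nhdsWithin_le_nhds
    simpa only [div_one, Pi.div_def] using hid.div hΓ one_ne_zero
  have hB : Tendsto (fun α : ℝ => T ^ (1 - α)) (nhdsWithin 1 (Iio 1)) (nhds 1) := by
    have hc : Continuous fun α : ℝ => T ^ (1 - α) := by
      simp only [Real.rpow_def_of_pos hT]
      fun_prop
    have h2 := (hc.tendsto (1:ℝ)).mono_left (nhdsWithin_le_nhds (s := Iio 1))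
    norm_num at h2
    exact h2
  have hC : Tendsto (fun α : ℝ => (1 - α) * ∫ u in Ioc (0:ℝ) T, g u * u ^ (-α))
      (nhdsWithin 1 (Iio 1)) (nhds 0) := aux_remainder hT hT2 hgcont hg0
  have hmain : Tendsto (fun α : ℝ =>
      (α / Real.Gamma (2 - α)) * (T ^ (1 - α)) * h t
        + (α / Real.Gamma (2 - α)) * ((1 - α) * ∫ u in Ioc (0:ℝ) T, g u * u ^ (-α)))
      (nhdsWithin 1 (Iio 1)) (nhds (h t)) := by
    have := ((hA.mul hB).mul_const (h t)).add (hA.mul hC)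
    simpa using this
  refine hmain.congr' ?_
  filter_upwards [self_mem_nhdsWithin,
    mem_nhdsWithin_of_mem_nhds (Ioi_mem_nhds one_pos)] with α h1 h2
  exact (key α ⟨h2, h1⟩).symm
end
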